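/- Fix integers N ≥ 2 and M ≥ 1, and ε = (ε₀,…,ε_{N−1}) ∈ {0,1}^N with ε_i = 0 and ε_{i+1} = 1 for some 0 ≤ i ≤ N−2; let ε' be obtained from ε by setting ε'_i = 1 and ε'_{i+1} = 0 (all other entries unchanged). Then: (1) the M-step d-heToda evolution with parameter ε (and likewise with ε') maps positive real data to positive real data; and (2) the transformation φ_i commutes with the time evolution, i.e. applying the M-step d-heToda evolution with parameter ε to positive data (q_l^{(s)})_{0≤l≤N−1, 0≤s≤M−1}, (e_l)_{0≤l≤N−2} and then applying φ_i (with all time superscripts shifted by M) to the evolved data gives the same result as first applying φ_i and then applying the M-step d-heToda evolution with parameter ε' to the transformed data. -/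

import Mathlib

/-- The pair `(q_i^{(t+M)}, e_i^{(t+1)})` of the discrete hungry elementary Toda recursion
at site `i`, given `prev = e_{i-1}^{(t+1)}` (with `e_{-1}^{(t+1)} = 0`).  The convention
`e_{N-1}^{(t)} = 0` is built in via the `if` guard. -/
noncomputable def dhPair (N : ℕ) (ε : ℕ → ℕ) (q e : ℕ → ℝ) (prev : ℝ) (i : ℕ) : ℝ × ℝ :=
  let eb : ℕ → ℝ := fun k => if k + 1 < N then e k else 0
  let qn : ℝ := q i + eb i - prev
  let en : ℝ :=
    if i + 1 < N then
      e i * (q (i + 1) + (ε (i + 1) : ℝ) * eb (i + 1)) / (qn + (ε i : ℝ) * prev)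
    else 0
  (qn, en)

/-- `dhStep N ε q e i = (q_i^{(t+M)}, e_i^{(t+1)})`, computed recursively in `i` from the
slice `q = q^{(t)}` and `e = e^{(t)}`. -/
noncomputable def dhStep (N : ℕ) (ε : ℕ → ℕ) (q e : ℕ → ℝ) : ℕ → ℝ × ℝ
  | 0 => dhPair N ε q e 0 0
  | i + 1 => dhPair N ε q e (dhStep N ε q e i).2 (i + 1)

/-- One time step of the discrete hungry elementary Toda evolution on the state
`s = ((q^{(t)}, q^{(t+1)}, …, q^{(t+M-1)}), e^{(t)})` (the first component lists the `M`
time slices, `s.1 j l = q_l^{(t+j)}`): the slices shift down, the new last slice is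
`q^{(t+M)}`, and `e` becomes `e^{(t+1)}`. -/
noncomputable def dhOneStep (N M : ℕ) (ε : ℕ → ℕ) (s : (ℕ → ℕ → ℝ) × (ℕ → ℝ)) :
    (ℕ → ℕ → ℝ) × (ℕ → ℝ) :=
  (fun j => if j + 1 < M then s.1 (j + 1) else fun i => (dhStep N ε (s.1 0) s.2 i).1,
   fun i => (dhStep N ε (s.1 0) s.2 i).2)

/-- The auxiliary quantities `f^{(j)}` of the birational transformation `φ_i`:
`f^{(0)} = e_i`, `f^{(j)} = f^{(j-1)} q_i^{(M-j)} / (f^{(j-1)} + q_{i+1}^{(M-j)})`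
(`qi, qi1` are the slice functions `s ↦ q_i^{(s)}, q_{i+1}^{(s)}`). -/
noncomputable def phiF (M : ℕ) (qi qi1 : ℕ → ℝ) (e0 : ℝ) : ℕ → ℝ
  | 0 => e0
  | j + 1 => phiF M qi qi1 e0 j * qi (M - j - 1) /
      (phiF M qi qi1 e0 j + qi1 (M - j - 1))

/-- The birational transformation `φ_i` on the state `s = ((q^{(0)}, …, q^{(M-1)}), e)`:
`q̃_i^{(M-j)} = q_{i+1}^{(M-j)} q_i^{(M-j)} / (f^{(j-1)} + q_{i+1}^{(M-j)})`,
`q̃_{i+1}^{(M-j)} = f^{(j-1)} + q_{i+1}^{(M-j)}`, `ẽ_i = f^{(M)}`, all other data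
unchanged. -/
noncomputable def phiMap (M i : ℕ) (s : (ℕ → ℕ → ℝ) × (ℕ → ℝ)) :
    (ℕ → ℕ → ℝ) × (ℕ → ℝ) :=
  let f := phiF M (fun j => s.1 j i) (fun j => s.1 j (i + 1)) (s.2 i)
  (fun j l =>
    if l = i then s.1 j (i + 1) * s.1 j i / (f (M - j - 1) + s.1 j (i + 1))
    else if l = i + 1 then f (M - j - 1) + s.1 j (i + 1)
    else s.1 j l,
   fun l => if l = i then f M else s.2 l)

/-- Positivity of the data relevant to the `N`-site, `M`-slice system. -/
def PosData (N M : ℕ) (s : (ℕ → ℕ → ℝ) × (ℕ → ℝ)) : Prop :=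
  (∀ j < M, ∀ l < N, 0 < s.1 j l) ∧ (∀ l, l + 1 < N → 0 < s.2 l)
section Test
variable {N : ℕ} {ε : ℕ → ℕ} {q e : ℕ → ℝ}

lemma dhPair_fst (prev : ℝ) (k : ℕ) :
    (dhPair N ε q e prev k).1 = q k + (if k + 1 < N then e k else 0) - prev := rfl

lemma dhPair_snd (prev : ℝ) (k : ℕ) :
    (dhPair N ε q e prev k).2 =
      if k + 1 < N then
        e k * (q (k + 1) + (ε (k + 1) : ℝ) * (if k + 1 + 1 < N then e (k + 1) else 0)) /
          ((q k + (if k + 1 < N then e k else 0) - prev) + (ε k : ℝ) * prev)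
      else 0 := rfl

noncomputable def dhPrev (N : ℕ) (ε : ℕ → ℕ) (q e : ℕ → ℝ) : ℕ → ℝ
  | 0 => 0
  | k + 1 => (dhStep N ε q e k).2

lemma dhStep_eq (k : ℕ) : dhStep N ε q e k = dhPair N ε q e (dhPrev N ε q e k) k := by
  cases k <;> rfl

lemma phiF_succ (M : ℕ) (qi qi1 : ℕ → ℝ) (e0 : ℝ) (j : ℕ) :
    phiF M qi qi1 e0 (j+1) = phiF M qi qi1 e0 j * qi (M - j - 1) /
      (phiF M qi qi1 e0 j + qi1 (M - j - 1)) := rfl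

lemma phiF_zero (M : ℕ) (qi qi1 : ℕ → ℝ) (e0 : ℝ) : phiF M qi qi1 e0 0 = e0 := rfl

end Test
section Pos
variable {N : ℕ} {ε : ℕ → ℕ} {q e : ℕ → ℝ}

lemma dhPair_key (hε : ∀ l, ε l = 0 ∨ ε l = 1)
    (hq : ∀ l, l < N → 0 < q l) (he : ∀ l, l + 1 < N → 0 < e l)
    (k : ℕ) (hk : k < N) (prev : ℝ) (hp0 : 0 ≤ prev)
    (hplt : prev < q k + (ε k : ℝ) * (if k + 1 < N then e k else 0)) :
    0 < (dhPair N ε q e prev k).1 ∧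
    (k + 1 < N → 0 < (dhPair N ε q e prev k).2 ∧
      (dhPair N ε q e prev k).2
        < q (k + 1) + (ε (k + 1) : ℝ) * (if k + 1 + 1 < N then e (k + 1) else 0)) ∧
    (¬ k + 1 < N → (dhPair N ε q e prev k).2 = 0) := by
  have hebk : 0 ≤ (if k + 1 < N then e k else 0) := by
    split
    · exact le_of_lt (he k ‹_›)
    · exact le_refl 0
  have hqk := hq k hk
  have hqn : 0 < (dhPair N ε q e prev k).1 ∧
      (if k + 1 < N then e k else 0) <
        (dhPair N ε q e prev k).1 + (ε k : ℝ) * prev := by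
    rw [dhPair_fst]
    rcases hε k with h | h
    · rw [h] at hplt ⊢
      push_cast at hplt ⊢
      constructor <;> [skip; skip] <;> nlinarith [hebk]
    · rw [h] at hplt ⊢
      push_cast at hplt ⊢
      constructor <;> nlinarith [hebk]
  refine ⟨hqn.1, ?_, ?_⟩
  · intro hk1
    have hek : 0 < e k := he k hk1
    have heb1 : 0 ≤ (if k + 1 + 1 < N then e (k + 1) else 0) := by
      split
      · exact le_of_lt (he (k+1) ‹_›)
      · exact le_refl 0
    have hX : 0 < q (k + 1) + (ε (k + 1) : ℝ) * (if k + 1 + 1 < N then e (k + 1) else 0) := by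
      have := hq (k+1) hk1
      positivity
    have hD : 0 < (q k + (if k + 1 < N then e k else 0) - prev) + (ε k : ℝ) * prev := by
      have := hqn.2
      rw [dhPair_fst] at this
      linarith [hebk]
    have heD : e k < (q k + (if k + 1 < N then e k else 0) - prev) + (ε k : ℝ) * prev := by
      have h := hqn.2
      rw [dhPair_fst] at h
      rwa [if_pos hk1] at h ⊢
    rw [dhPair_snd, if_pos hk1]
    constructor
    · exact div_pos (mul_pos hek hX) hD
    · rw [div_lt_iff₀ hD]
      nlinarith
  · intro hk1
    rw [dhPair_snd, if_neg hk1]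

lemma dhStep_pos (hε : ∀ l, ε l = 0 ∨ ε l = 1)
    (hq : ∀ l, l < N → 0 < q l) (he : ∀ l, l + 1 < N → 0 < e l) :
    ∀ k, k < N → 0 < (dhStep N ε q e k).1 ∧
    (k + 1 < N → 0 < (dhStep N ε q e k).2 ∧
      (dhStep N ε q e k).2
        < q (k + 1) + (ε (k + 1) : ℝ) * (if k + 1 + 1 < N then e (k + 1) else 0)) ∧
    (¬ k + 1 < N → (dhStep N ε q e k).2 = 0) := by
  intro k
  induction k with
  | zero =>
    intro hk
    have h0 : (0:ℝ) < q 0 + (ε 0 : ℝ) * (if 0 + 1 < N then e 0 else 0) := by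
      have hq0 := hq 0 hk
      have : 0 ≤ (if 0 + 1 < N then e 0 else 0) := by
        split
        · exact le_of_lt (he 0 ‹_›)
        · exact le_refl 0
      positivity
    exact dhPair_key hε hq he 0 hk 0 le_rfl (by simpa using h0)
  | succ k ih =>
    intro hk
    have hkN : k < N := Nat.lt_of_succ_lt hk
    obtain ⟨h1, h2, h3⟩ := ih hkN
    obtain ⟨hpos, hlt⟩ := h2 hk
    exact dhPair_key hε hq he (k+1) hk _ (le_of_lt hpos) hlt

end Pos
section Struct

lemma dhOneStep_posData {N M : ℕ} {ε : ℕ → ℕ} (hM : 1 ≤ M)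
    (hε : ∀ l, ε l = 0 ∨ ε l = 1) {s : (ℕ → ℕ → ℝ) × (ℕ → ℝ)}
    (hs : PosData N M s) : PosData N M (dhOneStep N M ε s) := by
  have hq : ∀ l, l < N → 0 < s.1 0 l := hs.1 0 hM
  have he : ∀ l, l + 1 < N → 0 < s.2 l := hs.2
  constructor
  · intro j hj l hl
    show 0 < (if j + 1 < M then s.1 (j+1) else fun i => (dhStep N ε (s.1 0) s.2 i).1) l
    split
    · exact hs.1 (j+1) ‹_› l hl
    · exact (dhStep_pos hε hq he l hl).1
  · intro l hl
    show 0 < (dhStep N ε (s.1 0) s.2 l).2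
    exact ((dhStep_pos hε hq he l (by omega)).2.1 hl).1

lemma iterate_posData {N M : ℕ} {ε : ℕ → ℕ} (hM : 1 ≤ M)
    (hε : ∀ l, ε l = 0 ∨ ε l = 1) {s : (ℕ → ℕ → ℝ) × (ℕ → ℝ)}
    (hs : PosData N M s) (n : ℕ) : PosData N M ((dhOneStep N M ε)^[n] s) := by
  induction n with
  | zero => exact hs
  | succ n ih =>
    rw [Function.iterate_succ_apply']
    exact dhOneStep_posData hM hε ih

noncomputable def QQ (N M : ℕ) (ε : ℕ → ℕ) (s : (ℕ → ℕ → ℝ) × (ℕ → ℝ)) (t : ℕ) : ℕ → ℝ :=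
  ((dhOneStep N M ε)^[t] s).1 0

noncomputable def EE (N M : ℕ) (ε : ℕ → ℕ) (s : (ℕ → ℕ → ℝ) × (ℕ → ℝ)) (t : ℕ) : ℕ → ℝ :=
  ((dhOneStep N M ε)^[t] s).2

lemma iter_slice {N M : ℕ} {ε : ℕ → ℕ} {s : (ℕ → ℕ → ℝ) × (ℕ → ℝ)} :
    ∀ j, j < M → ∀ t, ((dhOneStep N M ε)^[t] s).1 j = QQ N M ε s (t + j) := by
  intro j
  induction j with
  | zero => intro _ t; rfl
  | succ j ih =>
    intro hj t
    have h1 : ((dhOneStep N M ε)^[t+1] s).1 j = ((dhOneStep N M ε)^[t] s).1 (j+1) := by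
      rw [Function.iterate_succ_apply']
      show (if j + 1 < M then _ else _) = _
      rw [if_pos hj]
    rw [← h1, ih (by omega) (t+1)]
    exact congrArg (QQ N M ε s) (by omega)

lemma QQ_init {N M : ℕ} {ε : ℕ → ℕ} {s : (ℕ → ℕ → ℝ) × (ℕ → ℝ)} {t : ℕ} (ht : t < M) :
    QQ N M ε s t = s.1 t := by
  have h := iter_slice (N := N) (M := M) (ε := ε) (s := s) t ht 0
  simpa using h.symm

lemma EE_zero {N M : ℕ} {ε : ℕ → ℕ} {s : (ℕ → ℕ → ℝ) × (ℕ → ℝ)} :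
    EE N M ε s 0 = s.2 := rfl

lemma EE_rec {N M : ℕ} {ε : ℕ → ℕ} {s : (ℕ → ℕ → ℝ) × (ℕ → ℝ)} (t : ℕ) :
    EE N M ε s (t+1) = fun l => (dhStep N ε (QQ N M ε s t) (EE N M ε s t) l).2 := by
  show ((dhOneStep N M ε)^[t+1] s).2 = _
  rw [Function.iterate_succ_apply']
  rfl

lemma QQ_rec {N M : ℕ} {ε : ℕ → ℕ} {s : (ℕ → ℕ → ℝ) × (ℕ → ℝ)} (hM : 1 ≤ M) (t : ℕ) :
    QQ N M ε s (t + M) = fun l => (dhStep N ε (QQ N M ε s t) (EE N M ε s t) l).1 := by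
  have h1 : QQ N M ε s (t + M) = ((dhOneStep N M ε)^[t+1] s).1 (M-1) := by
    rw [iter_slice (M-1) (by omega) (t+1)]
    exact congrArg (QQ N M ε s) (by omega)
  rw [h1, Function.iterate_succ_apply']
  show (if (M-1) + 1 < M then _ else _) = _
  rw [if_neg (by omega)]
  rfl

lemma QQ_pos {N M : ℕ} {ε : ℕ → ℕ} (hM : 1 ≤ M)
    (hε : ∀ l, ε l = 0 ∨ ε l = 1) {s : (ℕ → ℕ → ℝ) × (ℕ → ℝ)}
    (hs : PosData N M s) (t : ℕ) : ∀ l, l < N → 0 < QQ N M ε s t l :=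
  (iterate_posData hM hε hs t).1 0 hM

lemma EE_pos {N M : ℕ} {ε : ℕ → ℕ} (hM : 1 ≤ M)
    (hε : ∀ l, ε l = 0 ∨ ε l = 1) {s : (ℕ → ℕ → ℝ) × (ℕ → ℝ)}
    (hs : PosData N M s) (t : ℕ) : ∀ l, l + 1 < N → 0 < EE N M ε s t l :=
  (iterate_posData hM hε hs t).2

lemma phiF_pos {M : ℕ} {qi qi1 : ℕ → ℝ} {e0 : ℝ} (hM : 1 ≤ M)
    (hqi : ∀ k, k < M → 0 < qi k) (hqi1 : ∀ k, k < M → 0 < qi1 k) (he0 : 0 < e0) :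
    ∀ j, 0 < phiF M qi qi1 e0 j := by
  intro j
  induction j with
  | zero => exact he0
  | succ j ih =>
    rw [phiF_succ]
    have h1 : M - j - 1 < M := by omega
    exact div_pos (mul_pos ih (hqi _ h1)) (add_pos ih (hqi1 _ h1))

end Struct
section Compare

variable {N i : ℕ} {ε ε' : ℕ → ℕ} {q e q' e' : ℕ → ℝ} {g : ℝ}

lemma pairCompare (hiN : i + 1 < N)
    (hεk : ∀ l, l ≠ i → l ≠ i + 1 → ε' l = ε l) (hε'i : ε' i = 1) (hε'i1 : ε' (i+1) = 0)
    (hεi : ε i = 0) (hεi1 : ε (i+1) = 1)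
    (hee : ∀ l, l ≠ i → e' l = e l)
    (hqq : ∀ l, l ≠ i → l ≠ i + 1 → q' l = q l)
    (hsum : q' i + e' i = q i)
    (hprod : e' i * (g + q (i+1)) = g * q i)
    (hq'i1 : q' (i+1) = g + q (i+1))
    (hqi : q i ≠ 0)
    (k : ℕ) (p p' : ℝ) (hp' : p' = if k = i + 1 then g else p) :
    ((dhPair N ε' q' e' p' k).2 = if k = i then g else (dhPair N ε q e p k).2) ∧
    ((dhPair N ε' q' e' p' k).1 = if k = i then (dhPair N ε q e p k).1 - e i
      else if k = i + 1 then (dhPair N ε q e p k).1 + p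
      else (dhPair N ε q e p k).1) := by
  rcases eq_or_ne k i with rfl | hki
  · -- site i
    rw [if_neg (show k ≠ k + 1 by omega)] at hp'
    rw [hp', if_pos rfl, if_pos rfl]
    constructor
    · rw [dhPair_snd, if_pos hiN, hε'i1, hε'i, hq'i1, if_pos hiN]
      push_cast
      have hden : q' k + e' k - p + 1 * p = q k := by linarith
      rw [zero_mul, add_zero, hden, hprod]
      exact mul_div_cancel_right₀ g hqi
    · rw [dhPair_fst, dhPair_fst, if_pos hiN, if_pos hiN]
      linarith
  · rcases eq_or_ne k (i+1) with rfl | hki1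
    · -- site i+1
      rw [if_pos rfl] at hp'
      rw [hp', if_neg hki, if_neg hki, if_pos rfl]
      constructor
      · rw [dhPair_snd, dhPair_snd]
        split
        · rw [hε'i1, hεi1, hee (i+1) hki, hqq (i+1+1) (by omega) (by omega),
            hεk (i+1+1) (by omega) (by omega), hee (i+1+1) (by omega), hq'i1]
          push_cast
          congr 1
          ring
        · rfl
      · rw [dhPair_fst, dhPair_fst, hq'i1, hee (i+1) hki]
        ring
    · -- other sites
      rw [if_neg hki1] at hp'
      rw [hp', if_neg hki, if_neg hki, if_neg hki1]
      have hq1 : q' k = q k := hqq k hki hki1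
      have he1 : e' k = e k := hee k hki
      constructor
      · rw [dhPair_snd, dhPair_snd]
        split
        · rw [hq1, he1, hεk k hki hki1]
          rcases eq_or_ne (k+1) i with hk1 | hk1
          · have hnum : q' (k+1) + (ε' (k+1) : ℝ) * (if k + 1 + 1 < N then e' (k+1) else 0)
                = q (k+1) + (ε (k+1) : ℝ) * (if k + 1 + 1 < N then e (k+1) else 0) := by
              subst hk1
              rw [hε'i, hεi, if_pos hiN, if_pos hiN]
              push_cast
              linarith
            rw [hnum]
          · have hk2 : k + 1 ≠ i + 1 := by omega
            rw [hqq (k+1) hk1 hk2, hεk (k+1) hk1 hk2, hee (k+1) hk1]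
        · rfl
      · rw [dhPair_fst, dhPair_fst, hq1, he1]

lemma stepCompare (hiN : i + 1 < N)
    (hεk : ∀ l, l ≠ i → l ≠ i + 1 → ε' l = ε l) (hε'i : ε' i = 1) (hε'i1 : ε' (i+1) = 0)
    (hεi : ε i = 0) (hεi1 : ε (i+1) = 1)
    (hee : ∀ l, l ≠ i → e' l = e l)
    (hqq : ∀ l, l ≠ i → l ≠ i + 1 → q' l = q l)
    (hsum : q' i + e' i = q i)
    (hprod : e' i * (g + q (i+1)) = g * q i)
    (hq'i1 : q' (i+1) = g + q (i+1))
    (hqi : q i ≠ 0) :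
    ∀ l, ((dhStep N ε' q' e' l).2 = if l = i then g else (dhStep N ε q e l).2) ∧
      ((dhStep N ε' q' e' l).1 = if l = i then (dhStep N ε q e l).1 - e i
        else if l = i + 1 then (dhStep N ε q e l).1 + (dhStep N ε q e i).2
        else (dhStep N ε q e l).1) := by
  intro l
  induction l with
  | zero =>
    have h := pairCompare hiN hεk hε'i hε'i1 hεi hεi1 hee hqq hsum hprod hq'i1 hqi
      0 0 0 (by rw [if_neg (show (0:ℕ) ≠ i + 1 by omega)])
    have e1 : dhStep N ε' q' e' 0 = dhPair N ε' q' e' 0 0 := rfl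
    have e2 : dhStep N ε q e 0 = dhPair N ε q e 0 0 := rfl
    rw [e1, e2]
    refine ⟨h.1, ?_⟩
    rw [h.2]
    simp only [if_neg (show (0:ℕ) ≠ i + 1 by omega)]
  | succ l ih =>
    have hp' : (dhStep N ε' q' e' l).2 = if l + 1 = i + 1 then g else (dhStep N ε q e l).2 := by
      rw [ih.1]
      rcases eq_or_ne l i with rfl | h
      · rw [if_pos rfl, if_pos rfl]
      · rw [if_neg h, if_neg (by omega)]
    have h := pairCompare hiN hεk hε'i hε'i1 hεi hεi1 hee hqq hsum hprod hq'i1 hqi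
      (l+1) (dhStep N ε q e l).2 (dhStep N ε' q' e' l).2 hp'
    have e1 : dhStep N ε' q' e' (l+1) = dhPair N ε' q' e' (dhStep N ε' q' e' l).2 (l+1) := rfl
    have e2 : dhStep N ε q e (l+1) = dhPair N ε q e (dhStep N ε q e l).2 (l+1) := rfl
    rw [e1, e2]
    refine ⟨h.1, ?_⟩
    rcases eq_or_ne (l+1) (i+1) with hli1 | hli1
    · have hl : l = i := by omega
      subst hl
      exact h.2
    · rw [h.2]
      simp only [if_neg hli1]

end Compare
section Rels

lemma QQ_rec' {N M : ℕ} {ε : ℕ → ℕ} {s : (ℕ → ℕ → ℝ) × (ℕ → ℝ)} (hM : 1 ≤ M) (t l : ℕ) :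
    QQ N M ε s (t + M) l = (dhStep N ε (QQ N M ε s t) (EE N M ε s t) l).1 :=
  congrFun (QQ_rec hM t) l

lemma EE_rec' {N M : ℕ} {ε : ℕ → ℕ} {s : (ℕ → ℕ → ℝ) × (ℕ → ℝ)} (t l : ℕ) :
    EE N M ε s (t + 1) l = (dhStep N ε (QQ N M ε s t) (EE N M ε s t) l).2 :=
  congrFun (EE_rec t) l

lemma site_rel1 {N i : ℕ} {ε : ℕ → ℕ} {q e : ℕ → ℝ} (hiN : i + 1 < N)
    (hεi : ε i = 0) (hεi1 : ε (i+1) = 1)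
    (h1 : (dhStep N ε q e i).1 ≠ 0) :
    (dhStep N ε q e i).2 * (dhStep N ε q e i).1
      = e i * (q (i+1) + (if i + 1 + 1 < N then e (i+1) else 0)) := by
  rw [dhStep_eq, dhPair_snd, if_pos hiN, hεi, hεi1, dhPair_fst]
  rw [dhStep_eq, dhPair_fst] at h1
  push_cast
  rw [one_mul, zero_mul, add_zero]
  exact div_mul_cancel₀ _ h1

lemma site_rel2 {N i : ℕ} {ε : ℕ → ℕ} {q e : ℕ → ℝ} :
    (dhStep N ε q e (i+1)).1
      = q (i+1) + (if i + 1 + 1 < N then e (i+1) else 0) - (dhStep N ε q e i).2 := by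
  have e2 : dhStep N ε q e (i+1) = dhPair N ε q e (dhStep N ε q e i).2 (i+1) := rfl
  rw [e2, dhPair_fst]

lemma phiF_succ_app (M : ℕ) (qi qi1 : ℕ → ℝ) (e0 : ℝ) (t : ℕ) (ht : t < M) :
    phiF M qi qi1 e0 (M - t) = phiF M qi qi1 e0 (M - t - 1) * qi t /
      (phiF M qi qi1 e0 (M - t - 1) + qi1 t) := by
  have h1 : M - t = (M - t - 1) + 1 := by omega
  have h2 : M - (M - t - 1) - 1 = t := by omega
  conv_lhs => rw [h1]
  rw [phiF_succ, h2]

end Rels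
theorem stmt_8 (N M : ℕ) (hN : 2 ≤ N) (hM : 1 ≤ M) (ε : ℕ → ℕ)
    (hε : ∀ l, ε l = 0 ∨ ε l = 1) (i : ℕ) (hi : i ≤ N - 2)
    (h0 : ε i = 0) (h1 : ε (i + 1) = 1) :
    let ε' : ℕ → ℕ := fun l => if l = i then 1 else if l = i + 1 then 0 else ε l
    (∀ s, PosData N M s → PosData N M ((dhOneStep N M ε)^[M] s)) ∧
    (∀ s, PosData N M s → PosData N M ((dhOneStep N M ε')^[M] s)) ∧
    (∀ s, PosData N M s →
      (∀ j < M, ∀ l < N,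
        (phiMap M i ((dhOneStep N M ε)^[M] s)).1 j l
          = ((dhOneStep N M ε')^[M] (phiMap M i s)).1 j l) ∧
      (∀ l, l + 1 < N →
        (phiMap M i ((dhOneStep N M ε)^[M] s)).2 l
          = ((dhOneStep N M ε')^[M] (phiMap M i s)).2 l)) := by
  intro ε'
  have hε'i : ε' i = 1 := by simp [ε']
  have hε'i1 : ε' (i+1) = 0 := by simp [ε']
  have hε'k : ∀ l, l ≠ i → l ≠ i + 1 → ε' l = ε l := by
    intro l hl1 hl2; simp [ε', hl1, hl2]
  have hε'01 : ∀ l, ε' l = 0 ∨ ε' l = 1 := by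
    intro l
    rcases eq_or_ne l i with rfl | hl1
    · right; exact hε'i
    rcases eq_or_ne l (i+1) with rfl | hl2
    · left; exact hε'i1
    · rw [hε'k l hl1 hl2]; exact hε l
  refine ⟨fun s hs => iterate_posData hM hε hs M,
    fun s hs => iterate_posData hM hε'01 hs M, ?_⟩
  intro s hs
  have hiN : i + 1 < N := by omega
  have hI : i < N := by omega
  have hQ1 : ∀ t l, l < N → 0 < QQ N M ε s t l := fun t => QQ_pos hM hε hs t
  have hE1 : ∀ t l, l + 1 < N → 0 < EE N M ε s t l := fun t => EE_pos hM hε hs t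
  have hFo : ∀ j, 0 < phiF M (fun j => s.1 j i) (fun j => s.1 j (i+1)) (s.2 i) j :=
    phiF_pos hM (fun k hk => hs.1 k hk i hI) (fun k hk => hs.1 k hk (i+1) hiN) (hs.2 i hiN)
  have hphi1 : ∀ (X : (ℕ → ℕ → ℝ) × (ℕ → ℝ)) (j l : ℕ), (phiMap M i X).1 j l =
      if l = i then X.1 j (i+1) * X.1 j i /
        (phiF M (fun j => X.1 j i) (fun j => X.1 j (i+1)) (X.2 i) (M - j - 1) + X.1 j (i+1))
      else if l = i + 1 then
        phiF M (fun j => X.1 j i) (fun j => X.1 j (i+1)) (X.2 i) (M - j - 1) + X.1 j (i+1)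
      else X.1 j l := fun X j l => rfl
  have hphi2 : ∀ (X : (ℕ → ℕ → ℝ) × (ℕ → ℝ)) (l : ℕ), (phiMap M i X).2 l =
      if l = i then phiF M (fun j => X.1 j i) (fun j => X.1 j (i+1)) (X.2 i) M
      else X.2 l := fun X l => rfl
  have hrel1 : ∀ t, EE N M ε s (t+1) i * QQ N M ε s (t+M) i
      = EE N M ε s t i * (QQ N M ε s t (i+1)
          + (if i+1+1 < N then EE N M ε s t (i+1) else 0)) := by
    intro t
    rw [EE_rec', QQ_rec' hM]
    exact site_rel1 hiN h0 h1 (by rw [← QQ_rec' hM]; exact ne_of_gt (hQ1 (t+M) i hI))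
  have hrel2 : ∀ t, QQ N M ε s (t+M) (i+1)
      = QQ N M ε s t (i+1) + (if i+1+1 < N then EE N M ε s t (i+1) else 0)
        - EE N M ε s (t+1) i := by
    intro t
    rw [QQ_rec' hM, EE_rec', site_rel2]
  have hrel3 : ∀ t, EE N M ε s t i * (EE N M ε s (t+1) i + QQ N M ε s (t+M) (i+1))
      = EE N M ε s (t+1) i * QQ N M ε s (t+M) i := by
    intro t
    rw [hrel2 t]
    linear_combination (-1 : ℝ) * hrel1 t
  have key : ∀ t, t ≤ M →
      (∀ l, l ≠ i → EE N M ε' (phiMap M i s) t l = EE N M ε s t l) ∧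
      (EE N M ε' (phiMap M i s) t i
        = phiF M (fun j => s.1 j i) (fun j => s.1 j (i+1)) (s.2 i) (M - t)) ∧
      (∀ u l, u < t + M → l ≠ i → l ≠ i + 1 →
        QQ N M ε' (phiMap M i s) u l = QQ N M ε s u l) ∧
      (∀ u, u < t → QQ N M ε' (phiMap M i s) (u + M) i
        = QQ N M ε s (u + M) i - EE N M ε s u i) ∧
      (∀ u, u < t → QQ N M ε' (phiMap M i s) (u + M) (i+1)
        = QQ N M ε s (u + M) (i+1) + EE N M ε s (u+1) i) := by
    intro t
    induction t with
    | zero =>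
      intro _
      refine ⟨?_, ?_, ?_, fun u hu => absurd hu (Nat.not_lt_zero u),
        fun u hu => absurd hu (Nat.not_lt_zero u)⟩
      · intro l hl
        show (phiMap M i s).2 l = s.2 l
        rw [hphi2, if_neg hl]
      · show (phiMap M i s).2 i = _
        rw [hphi2, if_pos rfl]
        exact congrArg (phiF M (fun j => s.1 j i) (fun j => s.1 j (i+1)) (s.2 i)) (by omega)
      · intro u l hu hl1 hl2
        rw [QQ_init (show u < M by omega), QQ_init (show u < M by omega), hphi1,
          if_neg hl1, if_neg hl2]
    | succ t ih =>
      intro ht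
      obtain ⟨A, B, C, D, E⟩ := ih (by omega)
      have htM : t < M := by omega
      have hqs : ∀ l, QQ N M ε s t l = s.1 t l := fun l => congrFun (QQ_init htM) l
      have hq's : ∀ l, QQ N M ε' (phiMap M i s) t l = (phiMap M i s).1 t l :=
        fun l => congrFun (QQ_init htM) l
      have hBt : EE N M ε' (phiMap M i s) t i
          = phiF M (fun j => s.1 j i) (fun j => s.1 j (i+1)) (s.2 i) (M - t - 1) * s.1 t i /
            (phiF M (fun j => s.1 j i) (fun j => s.1 j (i+1)) (s.2 i) (M - t - 1)
              + s.1 t (i+1)) := by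
        rw [B, phiF_succ_app _ _ _ _ t htM]
      have hden : phiF M (fun j => s.1 j i) (fun j => s.1 j (i+1)) (s.2 i) (M - t - 1)
          + s.1 t (i+1) ≠ 0 := ne_of_gt (add_pos (hFo _) (hs.1 t htM (i+1) hiN))
      have hsum : QQ N M ε' (phiMap M i s) t i + EE N M ε' (phiMap M i s) t i
          = QQ N M ε s t i := by
        rw [hq's i, hphi1, if_pos rfl, hBt, hqs i, ← add_div, div_eq_iff hden]
        ring
      have hprod : EE N M ε' (phiMap M i s) t i *
            (phiF M (fun j => s.1 j i) (fun j => s.1 j (i+1)) (s.2 i) (M - t - 1)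
              + QQ N M ε s t (i+1))
          = phiF M (fun j => s.1 j i) (fun j => s.1 j (i+1)) (s.2 i) (M - t - 1)
            * QQ N M ε s t i := by
        rw [hBt, hqs (i+1), hqs i, div_mul_cancel₀ _ hden]
      have hq'i1 : QQ N M ε' (phiMap M i s) t (i+1)
          = phiF M (fun j => s.1 j i) (fun j => s.1 j (i+1)) (s.2 i) (M - t - 1)
            + QQ N M ε s t (i+1) := by
        rw [hq's (i+1), hphi1, if_neg (show ¬ (i+1 = i) by omega), if_pos rfl, hqs (i+1)]
      have SC := stepCompare hiN hε'k hε'i hε'i1 h0 h1 A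
        (fun l hl1 hl2 => C t l (by omega) hl1 hl2) hsum hprod hq'i1
        (ne_of_gt (hQ1 t i hI))
      refine ⟨?_, ?_, ?_, ?_, ?_⟩
      · intro l hl
        rw [EE_rec', EE_rec', (SC l).1, if_neg hl]
      · rw [EE_rec', (SC i).1, if_pos rfl]
        exact congrArg (phiF M (fun j => s.1 j i) (fun j => s.1 j (i+1)) (s.2 i)) (by omega)
      · intro u l hu hl1 hl2
        rcases Nat.lt_or_ge u (t + M) with h | h
        · exact C u l h hl1 hl2
        · have hu' : u = t + M := by omega
          subst hu'
          rw [QQ_rec' hM, QQ_rec' hM, (SC l).2, if_neg hl1, if_neg hl2]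
      · intro u hu
        rcases Nat.lt_or_ge u t with h | h
        · exact D u h
        · have hu' : u = t := by omega
          subst hu'
          rw [QQ_rec' hM, QQ_rec' hM, (SC i).2, if_pos rfl]
      · intro u hu
        rcases Nat.lt_or_ge u t with h | h
        · exact E u h
        · have hu' : u = t := by omega
          subst hu'
          rw [QQ_rec' hM, QQ_rec' hM, (SC (i+1)).2, if_neg (show ¬ (i+1 = i) by omega),
            if_pos rfl, ← EE_rec']
  have hSlice : ∀ j, j < M → ∀ l, ((dhOneStep N M ε)^[M] s).1 j l = QQ N M ε s (M + j) l :=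
    fun j hj l => congrFun (iter_slice j hj M) l
  have hSlice' : ∀ j, j < M → ∀ l, ((dhOneStep N M ε')^[M] (phiMap M i s)).1 j l
      = QQ N M ε' (phiMap M i s) (M + j) l := fun j hj l => congrFun (iter_slice j hj M) l
  obtain ⟨A, B, C, D, E⟩ := key M le_rfl
  have hF' : ∀ k, k ≤ M →
      phiF M (fun j => ((dhOneStep N M ε)^[M] s).1 j i)
        (fun j => ((dhOneStep N M ε)^[M] s).1 j (i+1)) (((dhOneStep N M ε)^[M] s).2 i) k
      = EE N M ε s (M - k) i := by
    intro k
    induction k with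
    | zero =>
      intro _
      simp only [Nat.sub_zero]
      rfl
    | succ k ihk =>
      intro hk
      rw [phiF_succ, ihk (by omega)]
      have hlt : M - k - 1 < M := by omega
      have h1' : ((dhOneStep N M ε)^[M] s).1 (M - k - 1) i
          = QQ N M ε s ((M - k - 1) + M) i := by
        rw [hSlice _ hlt i]
        exact congrFun (congrArg (QQ N M ε s) (by omega)) i
      have h2' : ((dhOneStep N M ε)^[M] s).1 (M - k - 1) (i+1)
          = QQ N M ε s ((M - k - 1) + M) (i+1) := by
        rw [hSlice _ hlt (i+1)]
        exact congrFun (congrArg (QQ N M ε s) (by omega)) (i+1)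
      beta_reduce
      rw [h1', h2']
      have H := hrel3 (M - k - 1)
      have ek : M - k = (M - k - 1) + 1 := by omega
      rw [← ek] at H
      have ek1 : M - (k + 1) = M - k - 1 := by omega
      rw [ek1]
      have hW : EE N M ε s (M - k) i + QQ N M ε s ((M - k - 1) + M) (i+1) ≠ 0 :=
        ne_of_gt (add_pos (hE1 _ i hiN) (hQ1 _ (i+1) hiN))
      rw [div_eq_iff hW]
      linear_combination (-1 : ℝ) * H
  refine ⟨?_, ?_⟩
  · intro j hj l hl
    rw [hphi1, hSlice' j hj l]
    have hf : phiF M (fun j => ((dhOneStep N M ε)^[M] s).1 j i)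
        (fun j => ((dhOneStep N M ε)^[M] s).1 j (i+1)) (((dhOneStep N M ε)^[M] s).2 i)
        (M - j - 1) = EE N M ε s (j+1) i := by
      rw [hF' (M - j - 1) (by omega)]
      exact congrFun (congrArg (EE N M ε s) (by omega)) i
    rcases eq_or_ne l i with rfl | hli
    · rw [if_pos rfl, hf, hSlice j hj (l+1), hSlice j hj l, Nat.add_comm M j, D j hj]
      have hW2 : EE N M ε s (j+1) l + QQ N M ε s (j + M) (l+1) ≠ 0 :=
        ne_of_gt (add_pos (hE1 (j+1) l hiN) (hQ1 (j+M) (l+1) hiN))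
      rw [div_eq_iff hW2]
      linear_combination hrel3 j
    rcases eq_or_ne l (i+1) with rfl | hli1
    · rw [if_neg hli, if_pos rfl, hf, hSlice j hj (i+1), Nat.add_comm M j, E j hj]
      exact add_comm _ _
    · rw [if_neg hli, if_neg hli1, hSlice j hj l, C (M + j) l (by omega) hli hli1]
  · intro l hl
    have hR : ((dhOneStep N M ε')^[M] (phiMap M i s)).2 l
        = EE N M ε' (phiMap M i s) M l := rfl
    rw [hphi2, hR]
    rcases eq_or_ne l i with rfl | hli
    · rw [if_pos rfl, hF' M le_rfl, B, Nat.sub_self]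
      rfl
    · rw [if_neg hli, A l hli]
      rfl
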